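/- Let G be a finite connected simple graph with a cut-vertex x such that G − x has exactly two connected components C₁ and C₂, let v₁ be a universal vertex of C₁ such that v₁x is an edge of G that is a bridge of G, and suppose the degree of x in G is at least 3. Then G is not 2-γ'MB-critical. -/

import Mathlib

/-- `D` is a dominating set of `G`: every vertex not in `D` has a neighbor in `D`. -/
def Dominating {V : Type*} (G : SimpleGraph V) (D : Set V) : Prop :=
  ∀ v, v ∉ D → ∃ d ∈ D, G.Adj d v

/-- Dominator wins the S-game on `G` within one move. -/
def WinsWithin1 {V : Type*} (G : SimpleGraph V) : Prop :=
  ∀ s₁ : V, ∃ d₁, d₁ ≠ s₁ ∧ Dominating G {d₁}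

/-- Dominator wins the S-game on `G` within two moves. -/
def WinsWithin2 {V : Type*} (G : SimpleGraph V) : Prop :=
  ∀ s₁ : V, ∃ d₁, d₁ ≠ s₁ ∧
    (Dominating G {d₁} ∨
      ∀ s₂, s₂ ∉ ({s₁, d₁} : Set V) →
        ∃ d₂, d₂ ∉ ({s₁, d₁, s₂} : Set V) ∧ Dominating G {d₁, d₂})

/-- `γ'MB(G) = 2`: Dominator wins the S-game within two moves but not within one. -/
def MBPrimeEqTwo {V : Type*} (G : SimpleGraph V) : Prop :=
  WinsWithin2 G ∧ ¬ WinsWithin1 G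

/-- `G` is `2`-`γ'MB`-critical: `γ'MB(G) = 2` and for every edge `e`, Dominator does not
win the S-game on `G - e` within two moves. -/
def Critical2 {V : Type*} (G : SimpleGraph V) : Prop :=
  MBPrimeEqTwo G ∧ ∀ u v : V, G.Adj u v → ¬ WinsWithin2 (G.deleteEdges {s(u, v)})

/-- `v` is a universal vertex of the subgraph of `G` induced on `C`:
`v ∈ C` and `v` is adjacent in `G` to every other vertex of `C`. -/
def UnivIn {V : Type*} (G : SimpleGraph V) (C : Set V) (v : V) : Prop :=
  v ∈ C ∧ ∀ u ∈ C, u ≠ v → G.Adj v u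

/-- `G - x` has exactly two connected components, with vertex sets `C₁` and `C₂`. -/
def IsTwoComponents {V : Type*} (G : SimpleGraph V) (x : V) (C₁ C₂ : Set V) : Prop :=
  C₁.Nonempty ∧ C₂.Nonempty ∧ Disjoint C₁ C₂ ∧ C₁ ∪ C₂ = {x}ᶜ ∧
    (G.induce C₁).Connected ∧ (G.induce C₂).Connected ∧
    ∀ u ∈ C₁, ∀ v ∈ C₂, ¬ G.Adj u v


/-!
Suppose `G` were critical. Since `v₁x` is a bridge, `v₁` is the only neighbour of `x` in `C₁`, so
`x` has at least two neighbours in `C₂`. A pair `{a, b}` with `a ∈ C₁` dominates `G` exactly when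
`a` is universal in `C₁` and either `b` is universal in `C₂ ∪ {x}`, or `a = v₁` and `b` is universal
in `C₂`. Dominator's replies on `G` to a well-chosen first move of Staller (`x` if `C₁ = {v₁}`, and
otherwise `v₁`, and possibly the unique vertex universal in `C₂ ∪ {x}`) produce enough such pairs
to find an edge `e` (either `v₁x` or some `xw` with `w ∈ C₂`) such that in `G - e` either all four
pairs `{aᵢ, zⱼ}` from two disjoint pairs `{a₁, a₂}`, `{z₁, z₂}` dominate, or some vertex has three
dominating partners one of which has two further partners. Either configuration lets Dominator win
on `G - e` within two moves.
-/

section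

variable {V : Type*}

theorem not_isBridge_of_adj_of_adj {G : SimpleGraph V} {u v w : V} (huv : G.Adj u v)
    (hvw : G.Adj v w) : ¬ G.IsBridge s(u, w) := by
  rw [SimpleGraph.isBridge_iff, not_not]
  have huv' : (G.deleteEdges {s(u, w)}).Adj u v := by
    simp [huv, hvw.ne, huv.ne']
  have hvw' : (G.deleteEdges {s(u, w)}).Adj v w := by
    simp [hvw, hvw.ne, huv.ne']
  exact huv'.reachable.trans hvw'.reachable

section Domination

variable {G : SimpleGraph V}

theorem Dominating.adj_or_adj_of_pair {a b y : V} (hD : Dominating G {a, b}) (hya : y ≠ a)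
    (hyb : y ≠ b) : G.Adj a y ∨ G.Adj b y := by
  obtain ⟨d, hd, hdy⟩ := hD y (by simp [hya, hyb])
  rcases hd with rfl | rfl
  exacts [Or.inl hdy, Or.inr hdy]

theorem UnivIn.subset {S T : Set V} {a : V} (h : UnivIn G T a) (hST : S ⊆ T) (ha : a ∈ S) :
    UnivIn G S a :=
  ⟨ha, fun y hy hya => h.2 y (hST hy) hya⟩

theorem UnivIn.insert {S : Set V} {a x : V} (h : UnivIn G S a) (hax : G.Adj a x) :
    UnivIn G (insert x S) a :=
  ⟨Set.mem_insert_of_mem x h.1, fun y hy hya => hy.elim (fun hyx => hyx ▸ hax) (h.2 y · hya)⟩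

theorem univIn_insert_self {S : Set V} {x : V} (h : ∀ u ∈ S, G.Adj x u) :
    UnivIn G (insert x S) x :=
  ⟨Set.mem_insert x S, fun y hy hyx => h y (hy.resolve_left hyx)⟩

theorem UnivIn.deleteEdges_of_notMem {S : Set V} {a u v : V} (h : UnivIn G S a)
    (huv : u ∉ S ∨ v ∉ S) : UnivIn (G.deleteEdges {s(u, v)}) S a := by
  refine ⟨h.1, fun y hy hya => ?_⟩
  rw [SimpleGraph.deleteEdges_adj, Set.mem_singleton_iff, Sym2.eq_iff]
  refine ⟨h.2 y hy hya, ?_⟩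
  rintro (⟨rfl, rfl⟩ | ⟨rfl, rfl⟩)
  exacts [huv.elim (· h.1) (· hy), huv.elim (· hy) (· h.1)]

theorem UnivIn.deleteEdges_of_ne {S : Set V} {a u v : V} (h : UnivIn G S a) (hau : a ≠ u)
    (hav : a ≠ v) : UnivIn (G.deleteEdges {s(u, v)}) S a := by
  refine ⟨h.1, fun y hy hya => ?_⟩
  rw [SimpleGraph.deleteEdges_adj, Set.mem_singleton_iff, Sym2.eq_iff]
  exact ⟨h.2 y hy hya, by tauto⟩

theorem dominating_pair_of_univIn {S T : Set V} {a b : V} (hST : S ∪ T = Set.univ)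
    (ha : UnivIn G S a) (hb : UnivIn G T b) : Dominating G {a, b} := by
  intro y hy
  simp only [Set.mem_insert_iff, Set.mem_singleton_iff, not_or] at hy
  rcases Set.eq_univ_iff_forall.mp hST y with hyS | hyT
  · exact ⟨a, Set.mem_insert a _, ha.2 y hyS hy.1⟩
  · exact ⟨b, Set.mem_insert_of_mem a rfl, hb.2 y hyT hy.2⟩

end Domination

section Game

variable {H : SimpleGraph V}

theorem exists_reply_of_two_partners {s₁ d₁ p q : V} (hd₁ : d₁ ≠ s₁) (hpq : p ≠ q)
    (hp₁ : p ≠ s₁) (hpd : p ≠ d₁) (hq₁ : q ≠ s₁) (hqd : q ≠ d₁) (hDp : Dominating H {d₁, p})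
    (hDq : Dominating H {d₁, q}) :
    ∃ d, d ≠ s₁ ∧ (Dominating H {d} ∨
      ∀ s₂, s₂ ∉ ({s₁, d} : Set V) → ∃ d₂, d₂ ∉ ({s₁, d, s₂} : Set V) ∧ Dominating H {d, d₂}) := by
  refine ⟨d₁, hd₁, Or.inr fun s₂ _ => ?_⟩
  by_cases hs₂ : s₂ = p
  · exact ⟨q, by simp [hq₁, hqd, hs₂, hpq.symm], hDq⟩
  · exact ⟨p, by simp [hp₁, hpd, Ne.symm hs₂], hDp⟩

theorem exists_two_partners_of_winsWithin2 (h : WinsWithin2 H) {s₁ y y' : V}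
    (hsingle : ∀ d, d ≠ s₁ → ¬ Dominating H {d}) (hyy' : y ≠ y') (hy : y ≠ s₁) (hy' : y' ≠ s₁) :
    ∃ d₁ p q, d₁ ≠ s₁ ∧ p ≠ q ∧ p ≠ s₁ ∧ p ≠ d₁ ∧ q ≠ s₁ ∧ q ≠ d₁ ∧
      Dominating H {d₁, p} ∧ Dominating H {d₁, q} := by
  obtain ⟨d₁, hd₁, hreply⟩ := h s₁
  replace hreply := hreply.resolve_left (hsingle d₁ hd₁)
  obtain ⟨s₀, hs₀, hs₀d⟩ : ∃ s₀, s₀ ≠ s₁ ∧ s₀ ≠ d₁ := by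
    by_cases hyd : y = d₁
    · exact ⟨y', hy', fun hy'd => hyy' (hyd.trans hy'd.symm)⟩
    · exact ⟨y, hy, hyd⟩
  obtain ⟨p, hp, hDp⟩ := hreply s₀ (by simp [hs₀, hs₀d])
  simp only [Set.mem_insert_iff, Set.mem_singleton_iff, not_or] at hp
  obtain ⟨q, hq, hDq⟩ := hreply p (by simp [hp.1, hp.2.1])
  simp only [Set.mem_insert_iff, Set.mem_singleton_iff, not_or] at hq
  exact ⟨d₁, p, q, hd₁, Ne.symm hq.2.2, hp.1, hp.2.1, hq.1, hq.2.1, hDp, hDq⟩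

theorem winsWithin2_of_square {a a' z z' : V} (haa' : a ≠ a') (hzz' : z ≠ z') (haz : a ≠ z)
    (haz' : a ≠ z') (ha'z : a' ≠ z) (ha'z' : a' ≠ z')
    (hD : ∀ b ∈ ({a, a'} : Set V), ∀ c ∈ ({z, z'} : Set V), Dominating H {b, c}) :
    WinsWithin2 H := by
  have hD' : ∀ b ∈ ({a, a'} : Set V), ∀ c ∈ ({z, z'} : Set V), Dominating H {c, b} :=
    fun b hb c hc => Set.pair_comm b c ▸ hD b hb c hc
  intro s₁
  by_cases hsz : s₁ = z
  · subst hsz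
    exact exists_reply_of_two_partners hzz'.symm haa' haz haz' ha'z ha'z'
      (hD' a (by simp) z' (by simp)) (hD' a' (by simp) z' (by simp))
  by_cases hsz' : s₁ = z'
  · subst hsz'
    exact exists_reply_of_two_partners hzz' haa' haz' haz ha'z' ha'z
      (hD' a (by simp) z (by simp)) (hD' a' (by simp) z (by simp))
  by_cases hsa : s₁ = a
  · subst hsa
    exact exists_reply_of_two_partners haa'.symm hzz' (Ne.symm haz) (Ne.symm ha'z)
      (Ne.symm haz') (Ne.symm ha'z') (hD a' (by simp) z (by simp)) (hD a' (by simp) z' (by simp))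
  · exact exists_reply_of_two_partners (Ne.symm hsa) hzz' (Ne.symm hsz) (Ne.symm haz)
      (Ne.symm hsz') (Ne.symm haz') (hD a (by simp) z (by simp)) (hD a (by simp) z' (by simp))

theorem winsWithin2_of_three_partners {v z p q a a' : V} (hvz : v ≠ z) (hvp : v ≠ p)
    (hvq : v ≠ q) (hzp : z ≠ p) (hzq : z ≠ q) (hpq : p ≠ q) (haa' : a ≠ a') (hav : a ≠ v)
    (ha'v : a' ≠ v) (haz : a ≠ z) (ha'z : a' ≠ z)
    (hv : ∀ c ∈ ({z, p, q} : Set V), Dominating H {v, c})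
    (hz : ∀ b ∈ ({a, a'} : Set V), Dominating H {z, b}) : WinsWithin2 H := by
  intro s₁
  by_cases hsv : s₁ = v
  · subst hsv
    exact exists_reply_of_two_partners hvz.symm haa' hav haz ha'v ha'z
      (hz a (by simp)) (hz a' (by simp))
  by_cases hsz : s₁ = z
  · subst hsz
    exact exists_reply_of_two_partners hvz hpq hzp.symm hvp.symm hzq.symm hvq.symm
      (hv p (by simp)) (hv q (by simp))
  by_cases hsp : s₁ = p
  · subst hsp
    exact exists_reply_of_two_partners hvp hzq hzp hvz.symm hpq.symm hvq.symm
      (hv z (by simp)) (hv q (by simp))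
  · exact exists_reply_of_two_partners (Ne.symm hsv) hzp (Ne.symm hsz) hvz.symm (Ne.symm hsp)
      hvp.symm (hv z (by simp)) (hv p (by simp))

end Game

namespace IsTwoComponents

variable {G : SimpleGraph V} {x : V} {C₁ C₂ : Set V}

theorem symm (h : IsTwoComponents G x C₁ C₂) : IsTwoComponents G x C₂ C₁ := by
  obtain ⟨h₁, h₂, hdisj, hunion, hc₁, hc₂, hcross⟩ := h
  exact ⟨h₂, h₁, hdisj.symm, Set.union_comm C₁ C₂ ▸ hunion, hc₂, hc₁,
    fun u hu v hv huv => hcross v hv u hu huv.symm⟩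

theorem notMem_left (h : IsTwoComponents G x C₁ C₂) : x ∉ C₁ := fun hx =>
  (h.2.2.2.1.symm ▸ Set.mem_union_left C₂ hx : x ∈ ({x}ᶜ : Set V)) rfl

theorem mem_or_mem (h : IsTwoComponents G x C₁ C₂) {y : V} (hy : y ≠ x) : y ∈ C₁ ∨ y ∈ C₂ := by
  rw [← Set.mem_union, h.2.2.2.1]
  exact hy

theorem ne_of_mem_left_of_mem_insert (h : IsTwoComponents G x C₁ C₂) {a b : V} (ha : a ∈ C₁)
    (hb : b ∈ insert x C₂) : a ≠ b := by
  rintro rfl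
  exact hb.elim (fun hax => h.notMem_left (hax ▸ ha)) (Set.disjoint_left.mp h.2.2.1 ha)

theorem ne_of_mem_left_of_mem_right (h : IsTwoComponents G x C₁ C₂) {a b : V} (ha : a ∈ C₁)
    (hb : b ∈ C₂) : a ≠ b :=
  h.ne_of_mem_left_of_mem_insert ha (Set.mem_insert_of_mem x hb)

theorem union_insert (h : IsTwoComponents G x C₁ C₂) : C₁ ∪ insert x C₂ = Set.univ := by
  refine Set.eq_univ_of_forall fun y => ?_
  by_cases hy : y = x
  · exact Or.inr (Or.inl hy)
  · exact (h.mem_or_mem hy).imp_right (Set.mem_insert_of_mem x)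

theorem mem_or_eq_of_adj (h : IsTwoComponents G x C₁ C₂) {u y : V} (hu : u ∈ C₁)
    (huy : G.Adj u y) : y ∈ C₁ ∨ y = x := by
  by_cases hy : y = x
  · exact Or.inr hy
  · exact Or.inl ((h.mem_or_mem hy).resolve_right (h.2.2.2.2.2.2 u hu y · huy))

theorem mem_or_mem_of_dominating_pair (h : IsTwoComponents G x C₁ C₂) {a b u : V}
    (hD : Dominating G {a, b}) (hu : u ∈ C₁) (hux : x = a ∨ x = b → ¬ G.Adj x u) :
    a ∈ C₁ ∨ b ∈ C₁ := by
  by_cases hua : u = a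
  · exact Or.inl (hua ▸ hu)
  by_cases hub : u = b
  · exact Or.inr (hub ▸ hu)
  rcases hD.adj_or_adj_of_pair hua hub with hau | hbu
  · refine Or.inl ((h.mem_or_eq_of_adj hu hau.symm).resolve_right ?_)
    rintro rfl
    exact hux (Or.inl rfl) hau
  · refine Or.inr ((h.mem_or_eq_of_adj hu hbu.symm).resolve_right ?_)
    rintro rfl
    exact hux (Or.inr rfl) hbu

theorem eq_of_dominating_singleton (h : IsTwoComponents G x C₁ C₂) {d : V}
    (hD : Dominating G {d}) : d = x := by
  by_contra hdx
  have hD' : Dominating G {d, d} := by rwa [Set.pair_eq_singleton]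
  have hxd : ¬ (x = d ∨ x = d) := fun hxd => hdx (hxd.elim Eq.symm Eq.symm)
  have hd₁ := (h.mem_or_mem_of_dominating_pair hD' h.1.some_mem (absurd · hxd)).elim id id
  have hd₂ := (h.symm.mem_or_mem_of_dominating_pair hD' h.2.1.some_mem (absurd · hxd)).elim id id
  exact Set.disjoint_left.mp h.2.2.1 hd₁ hd₂

theorem exists_adj_right_ne (h : IsTwoComponents G x C₁ C₂) {v₁ : V}
    (hx₁ : ∀ u ∈ C₁, G.Adj x u → u = v₁) (hdeg : 3 ≤ (G.neighborSet x).ncard) (z : V) :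
    ∃ w ∈ C₂, G.Adj x w ∧ w ≠ z := by
  by_contra! hcon
  have hsub : G.neighborSet x ⊆ {v₁, z} := fun y (hy : G.Adj x y) =>
    (h.mem_or_mem hy.ne').elim (fun hy₁ => Or.inl (hx₁ y hy₁ hy))
      (fun hy₂ => Or.inr (hcon y hy₂ hy))
  have := (Set.ncard_le_ncard hsub (Set.toFinite _)).trans (Set.ncard_insert_le v₁ {z})
  rw [Set.ncard_singleton] at this
  omega

theorem univIn_of_dominating_pair (h : IsTwoComponents G x C₁ C₂) {v₁ a b : V}
    (hv₁ : UnivIn G C₁ v₁) (hx₁ : ∀ u ∈ C₁, G.Adj x u → u = v₁) (ha : a ∈ C₁)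
    (hD : Dominating G {a, b}) :
    UnivIn G C₁ a ∧ (UnivIn G (insert x C₂) b ∨ a = v₁ ∧ UnivIn G C₂ b) := by
  have hax : a ≠ x := fun hax => h.notMem_left (hax ▸ ha)
  have hb : b ∈ insert x C₂ := by
    by_contra hb
    simp only [Set.mem_insert_iff, not_or] at hb
    rcases h.symm.mem_or_mem_of_dominating_pair hD h.2.1.some_mem
        (fun hx => absurd hx (by tauto)) with ha₂ | hb₂
    · exact h.ne_of_mem_left_of_mem_right ha ha₂ rfl
    · exact hb.2 hb₂
  have hcross : ∀ u ∈ C₁, ∀ c ∈ C₂, ¬ G.Adj u c := h.2.2.2.2.2.2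
  have hbC₂ : ∀ c ∈ C₂, c ≠ b → G.Adj b c := fun c hc hcb =>
    (hD.adj_or_adj_of_pair (h.ne_of_mem_left_of_mem_right ha hc).symm hcb).resolve_left
      (hcross a ha c hc)
  refine ⟨⟨ha, fun u hu hua => ?_⟩, ?_⟩
  · rcases hD.adj_or_adj_of_pair hua (h.ne_of_mem_left_of_mem_insert hu hb) with hau | hbu
    · exact hau
    · obtain rfl : b = x := hb.resolve_right fun hb₂ => hcross u hu b hb₂ hbu.symm
      obtain rfl := hx₁ u hu hbu
      exact (hv₁.2 a ha (Ne.symm hua)).symm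
  · rcases hb with rfl | hb₂
    · exact Or.inl (univIn_insert_self fun c hc => hbC₂ c hc
        (h.symm.ne_of_mem_left_of_mem_insert hc (Set.mem_insert _ _)))
    · have hxb : x ≠ b := (h.symm.ne_of_mem_left_of_mem_insert hb₂ (Set.mem_insert x C₁)).symm
      rcases hD.adj_or_adj_of_pair hax.symm hxb with hxa | hbx
      · exact Or.inr ⟨hx₁ a ha hxa.symm, hb₂, hbC₂⟩
      · exact Or.inl (UnivIn.insert ⟨hb₂, hbC₂⟩ hbx)


theorem eq_and_univIn_of_dominating_pair (h : IsTwoComponents G x C₁ C₂) {v₁ a b : V}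
    (hv₁ : UnivIn G C₁ v₁) (hx₁ : ∀ u ∈ C₁, G.Adj x u → u = v₁) (ha : a ∈ C₁)
    (hD : Dominating G {a, b})
    (hZ : UnivIn G C₁ a → UnivIn G (insert x C₂) b → a = v₁ ∧ b ≠ x) :
    a = v₁ ∧ UnivIn G C₂ b := by
  obtain ⟨hUa, hb | hb⟩ := h.univIn_of_dominating_pair hv₁ hx₁ ha hD
  · obtain ⟨hav, hbx⟩ := hZ hUa hb
    exact ⟨hav, hb.subset (Set.subset_insert x C₂) (hb.1.resolve_left hbx)⟩
  · exact hb

theorem exists_univIn_right_of_winsWithin2 (h : IsTwoComponents G x C₁ C₂) {v₁ s₁ y : V}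
    (hv₁ : UnivIn G C₁ v₁) (hx₁ : ∀ u ∈ C₁, G.Adj x u → u = v₁) (hwin : WinsWithin2 G)
    (hv₁s : v₁ ≠ s₁) (hy : y ≠ s₁) (hyv : y ≠ v₁)
    (hmeet : ∀ a b, a ≠ s₁ → b ≠ s₁ → Dominating G {a, b} → a ∈ C₁ ∨ b ∈ C₁)
    (hZ : ∀ a b, a ≠ s₁ → b ≠ s₁ → UnivIn G C₁ a → UnivIn G (insert x C₂) b → a = v₁ ∧ b ≠ x) :
    ∃ p q, UnivIn G C₂ p ∧ UnivIn G C₂ q ∧ p ≠ q ∧ p ≠ s₁ ∧ q ≠ s₁ := by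
  have hsingle : ∀ d, d ≠ s₁ → ¬ Dominating G {d} := fun d hd hD =>
    h.notMem_left <| h.eq_of_dominating_singleton hD ▸
      (hmeet d d hd hd (by rwa [Set.pair_eq_singleton])).elim id id
  obtain ⟨d, p, q, hd, hpq, hp, -, hq, hqd, hDp, hDq⟩ :=
    exists_two_partners_of_winsWithin2 hwin hsingle hyv hy hv₁s
  have hshape : ∀ r, r ≠ s₁ → Dominating G {d, r} →
      d = v₁ ∧ UnivIn G C₂ r ∨ r = v₁ ∧ UnivIn G C₂ d := by
    intro r hr hD
    rcases hmeet d r hd hr hD with hdC₁ | hrC₁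
    · exact Or.inl (h.eq_and_univIn_of_dominating_pair hv₁ hx₁ hdC₁ hD (hZ d r hd hr))
    · rw [Set.pair_comm] at hD
      exact Or.inr (h.eq_and_univIn_of_dominating_pair hv₁ hx₁ hrC₁ hD (hZ r d hr hd))
  have hnot : ¬ UnivIn G C₂ v₁ := fun hU => h.ne_of_mem_left_of_mem_right hv₁.1 hU.1 rfl
  rcases hshape p hp hDp with ⟨hdv, hUp⟩ | ⟨hpv, hUd⟩
  · rcases hshape q hq hDq with ⟨-, hUq⟩ | ⟨hqv, -⟩
    · exact ⟨p, q, hUp, hUq, hpq, hp, hq⟩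
    · exact absurd (hqv.trans hdv.symm) hqd
  · rcases hshape q hq hDq with ⟨hdv, -⟩ | ⟨hqv, -⟩
    · exact absurd (hdv ▸ hUd) hnot
    · exact absurd (hpv.trans hqv.symm) hpq

theorem exists_univIn_left_ne_of_winsWithin2 (h : IsTwoComponents G x C₁ C₂) {v₁ u₁ : V}
    (hv₁ : UnivIn G C₁ v₁) (hx₁ : ∀ u ∈ C₁, G.Adj x u → u = v₁) (hwin : WinsWithin2 G)
    (hu₁ : u₁ ∈ C₁) (hu₁v : u₁ ≠ v₁) :
    ∃ a, UnivIn G C₁ a ∧ a ≠ v₁ ∧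
      ((∃ z z', UnivIn G (insert x C₂) z ∧ UnivIn G (insert x C₂) z' ∧ z ≠ z') ∨
        ∃ a', UnivIn G C₁ a' ∧ a' ≠ v₁ ∧ a ≠ a' ∧ ∃ z, UnivIn G (insert x C₂) z) := by
  have hxu₁ : ¬ G.Adj x u₁ := fun hxu => hu₁v (hx₁ u₁ hu₁ hxu)
  have hmeet : ∀ {a b}, Dominating G {a, b} → a ∈ C₁ ∨ b ∈ C₁ := fun hD =>
    h.mem_or_mem_of_dominating_pair hD hu₁ fun _ => hxu₁
  have hsingle : ∀ d, d ≠ v₁ → ¬ Dominating G {d} := fun _ _ hD =>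
    h.notMem_left <| h.eq_of_dominating_singleton hD ▸
      (hmeet (by rwa [Set.pair_eq_singleton])).elim id id
  have hshape : ∀ a b, a ∈ C₁ → a ≠ v₁ → Dominating G {a, b} →
      UnivIn G C₁ a ∧ UnivIn G (insert x C₂) b := fun a b ha hav hD =>
    (h.univIn_of_dominating_pair hv₁ hx₁ ha hD).imp_right (·.resolve_right fun hb => hav hb.1)
  have hxv : x ≠ v₁ := (h.ne_of_mem_left_of_mem_insert hv₁.1 (Set.mem_insert x C₂)).symm
  obtain ⟨d, p, q, hd, hpq, hp, -, hq, -, hDp, hDq⟩ :=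
    exists_two_partners_of_winsWithin2 hwin hsingle (h.ne_of_mem_left_of_mem_insert hu₁
      (Set.mem_insert x C₂)) hu₁v hxv
  rcases hmeet hDp with hdC₁ | hpC₁
  · exact ⟨d, (hshape d p hdC₁ hd hDp).1, hd,
      Or.inl ⟨p, q, (hshape d p hdC₁ hd hDp).2, (hshape d q hdC₁ hd hDq).2, hpq⟩⟩
  · rw [Set.pair_comm] at hDp hDq
    have hZd := (hshape p d hpC₁ hp hDp).2
    have hqC₁ : q ∈ C₁ := (hmeet hDq).resolve_right fun hdC₁ =>
      h.ne_of_mem_left_of_mem_insert hdC₁ hZd.1 rfl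
    exact ⟨p, (hshape p d hpC₁ hp hDp).1, hp,
      Or.inr ⟨q, (hshape q d hqC₁ hq hDq).1, hq, hpq, d, hZd⟩⟩


theorem winsWithin2_deleteEdge_of_square (h : IsTwoComponents G x C₁ C₂) {u a a' z z' : V}
    (hu : u ∈ C₁) (ha : UnivIn G C₁ a) (ha' : UnivIn G C₁ a') (haa' : a ≠ a')
    (hz : UnivIn G (insert x C₂) z) (hz' : UnivIn G (insert x C₂) z') (hzz' : z ≠ z') :
    WinsWithin2 (G.deleteEdges {s(u, x)}) := by
  have hne {b c : V} (hb : UnivIn G C₁ b) (hc : UnivIn G (insert x C₂) c) : b ≠ c :=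
    h.ne_of_mem_left_of_mem_insert hb.1 hc.1
  refine winsWithin2_of_square haa' hzz' (hne ha hz) (hne ha hz') (hne ha' hz) (hne ha' hz')
    fun b hb c hc => ?_
  have hb' : UnivIn G C₁ b := by rcases hb with rfl | rfl <;> assumption
  have hc' : UnivIn G (insert x C₂) c := by rcases hc with rfl | rfl <;> assumption
  exact dominating_pair_of_univIn h.union_insert
    (hb'.deleteEdges_of_notMem (Or.inr h.notMem_left))
    (hc'.deleteEdges_of_notMem (Or.inl fun hu' => h.ne_of_mem_left_of_mem_insert hu hu' rfl))

theorem winsWithin2_deleteEdge_of_three_partners (h : IsTwoComponents G x C₁ C₂)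
    {v₁ a a' z p q w : V} (hv₁ : UnivIn G C₁ v₁) (hadj : G.Adj v₁ x) (ha : UnivIn G C₁ a)
    (ha' : UnivIn G C₁ a') (hav : a ≠ v₁) (ha'v : a' ≠ v₁) (haa' : a ≠ a')
    (hz : UnivIn G (insert x C₂) z) (hzx : z ≠ x) (hp : UnivIn G C₂ p) (hq : UnivIn G C₂ q)
    (hpq : p ≠ q) (hpz : p ≠ z) (hqz : q ≠ z) (hw : w ∈ C₂) (hwz : w ≠ z) :
    WinsWithin2 (G.deleteEdges {s(x, w)}) := by
  have hzC₂ : UnivIn G C₂ z := hz.subset (Set.subset_insert x C₂) (hz.1.resolve_left hzx)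
  have hv₁' : UnivIn (G.deleteEdges {s(x, w)}) (insert x C₁) v₁ :=
    (hv₁.insert hadj).deleteEdges_of_notMem
      (Or.inr fun hw' => h.symm.ne_of_mem_left_of_mem_insert hw hw' rfl)
  have hDv : ∀ c ∈ ({z, p, q} : Set V), Dominating (G.deleteEdges {s(x, w)}) {v₁, c} := by
    intro c hc
    have hc' : UnivIn G C₂ c := by rcases hc with rfl | rfl | rfl <;> assumption
    exact dominating_pair_of_univIn ((Set.union_comm _ _).trans h.symm.union_insert) hv₁'
      (hc'.deleteEdges_of_notMem (Or.inl h.symm.notMem_left))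
  have hDz : ∀ b ∈ ({a, a'} : Set V), Dominating (G.deleteEdges {s(x, w)}) {z, b} := by
    intro b hb
    have hb' : UnivIn G C₁ b := by rcases hb with rfl | rfl <;> assumption
    exact dominating_pair_of_univIn ((Set.union_comm _ _).trans h.union_insert)
      (hz.deleteEdges_of_ne hzx hwz.symm) (hb'.deleteEdges_of_notMem (Or.inl h.notMem_left))
  have hne {b c : V} (hb : b ∈ C₁) (hc : UnivIn G C₂ c) : b ≠ c :=
    h.ne_of_mem_left_of_mem_right hb hc.1
  exact winsWithin2_of_three_partners (hne hv₁.1 hzC₂) (hne hv₁.1 hp) (hne hv₁.1 hq) hpz.symm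
    hqz.symm hpq haa' hav ha'v (hne ha.1 hzC₂) (hne ha'.1 hzC₂) hDv hDz

theorem winsWithin2_deleteEdge_of_forall_eq (h : IsTwoComponents G x C₁ C₂) {v₁ w : V}
    (hv₁ : UnivIn G C₁ v₁) (hx₁ : ∀ u ∈ C₁, G.Adj x u → u = v₁) (hC₁ : ∀ u ∈ C₁, u = v₁)
    (hadj : G.Adj v₁ x) (hw : w ∈ C₂) (hwin : WinsWithin2 G) :
    WinsWithin2 (G.deleteEdges {s(x, w)}) := by
  have hwx : w ≠ x := h.symm.ne_of_mem_left_of_mem_insert hw (Set.mem_insert x C₁)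
  obtain ⟨p, q, hp, hq, hpq, -, -⟩ := h.exists_univIn_right_of_winsWithin2 hv₁ hx₁ hwin
    hadj.ne hwx (h.ne_of_mem_left_of_mem_right hv₁.1 hw).symm
    (fun _ _ ha hb hD => h.mem_or_mem_of_dominating_pair hD hv₁.1 fun hx =>
      (hx.elim (ha ·.symm) (hb ·.symm)).elim)
    (fun a _ _ hb hUa _ => ⟨hC₁ a hUa.1, hb⟩)
  have hw' : w ∉ insert x C₁ := fun hw' => h.symm.ne_of_mem_left_of_mem_insert hw hw' rfl
  have hS : ∀ b ∈ ({v₁, x} : Set V), UnivIn (G.deleteEdges {s(x, w)}) (insert x C₁) b := by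
    rintro b (rfl | rfl)
    · exact (hv₁.insert hadj).deleteEdges_of_notMem (Or.inr hw')
    · exact (univIn_insert_self fun u hu => hC₁ u hu ▸ hadj.symm).deleteEdges_of_notMem
        (Or.inr hw')
  have hne {b c : V} (hb : b ∈ insert x C₁) (hc : UnivIn G C₂ c) : b ≠ c :=
    h.symm.ne_of_mem_left_of_mem_insert hc.1 hb |>.symm
  refine winsWithin2_of_square hadj.ne hpq (hne (Set.mem_insert_of_mem x hv₁.1) hp)
    (hne (Set.mem_insert_of_mem x hv₁.1) hq) (hne (Set.mem_insert x C₁) hp)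
    (hne (Set.mem_insert x C₁) hq) fun b hb c hc => ?_
  have hc' : UnivIn G C₂ c := by rcases hc with rfl | rfl <;> assumption
  exact dominating_pair_of_univIn ((Set.union_comm _ _).trans h.symm.union_insert) (hS b hb)
    (hc'.deleteEdges_of_notMem (Or.inl h.symm.notMem_left))

theorem exists_winsWithin2_deleteEdge_of_ne (h : IsTwoComponents G x C₁ C₂) {v₁ u₁ : V}
    (hv₁ : UnivIn G C₁ v₁) (hx₁ : ∀ u ∈ C₁, G.Adj x u → u = v₁) (hadj : G.Adj v₁ x)
    (hdeg : 3 ≤ (G.neighborSet x).ncard) (hwin : WinsWithin2 G) (hu₁ : u₁ ∈ C₁)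
    (hu₁v : u₁ ≠ v₁) : ∃ u v, G.Adj u v ∧ WinsWithin2 (G.deleteEdges {s(u, v)}) := by
  obtain ⟨a, ha, hav, ⟨z, z', hz, hz', hzz'⟩ | ⟨a', ha', ha'v, haa', z, hz⟩⟩ :=
    h.exists_univIn_left_ne_of_winsWithin2 hv₁ hx₁ hwin hu₁ hu₁v
  · exact ⟨v₁, x, hadj, h.winsWithin2_deleteEdge_of_square hv₁.1 hv₁ ha (Ne.symm hav) hz hz' hzz'⟩
  by_cases hZ : ∃ z', UnivIn G (insert x C₂) z' ∧ z' ≠ z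
  · obtain ⟨z', hz', hz'z⟩ := hZ
    exact ⟨v₁, x, hadj, h.winsWithin2_deleteEdge_of_square hv₁.1 hv₁ ha (Ne.symm hav) hz' hz hz'z⟩
  push Not at hZ
  -- Staller opens at `z`.
  have hxu₁ : ¬ G.Adj x u₁ := fun hxu => hu₁v (hx₁ u₁ hu₁ hxu)
  obtain ⟨p, q, hp, hq, hpq, hpz, hqz⟩ := h.exists_univIn_right_of_winsWithin2 hv₁ hx₁ hwin
    (h.ne_of_mem_left_of_mem_insert hv₁.1 hz.1) (h.ne_of_mem_left_of_mem_insert hu₁ hz.1) hu₁v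
    (fun _ _ _ _ hD => h.mem_or_mem_of_dominating_pair hD hu₁ fun _ => hxu₁)
    (fun _ b _ hb _ hZb => absurd (hZ b hZb) hb)
  have hzx : z ≠ x := fun hzx =>
    hpz (hZ p (hp.insert (hzx ▸ hz.2 p (Set.mem_insert_of_mem x hp.1) hpz).symm))
  obtain ⟨w, hw, hxw, hwz⟩ := h.exists_adj_right_ne hx₁ hdeg z
  exact ⟨x, w, hxw, h.winsWithin2_deleteEdge_of_three_partners hv₁ hadj ha ha' hav ha'v haa' hz
    hzx hp hq hpq hpz hqz hw hwz⟩

end IsTwoComponents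

end

theorem stmt10_general {V : Type*} (G : SimpleGraph V)
    (x : V) (C₁ C₂ : Set V) (hcomp : IsTwoComponents G x C₁ C₂)
    (v₁ : V) (hv₁ : UnivIn G C₁ v₁)
    (hadj : G.Adj v₁ x) (hbridge : G.IsBridge s(v₁, x))
    (hdeg : 3 ≤ (G.neighborSet x).ncard) :
    ¬ Critical2 G := by
  rintro ⟨⟨hwin, -⟩, hcrit⟩
  have hx₁ : ∀ u ∈ C₁, G.Adj x u → u = v₁ := fun u hu hxu => by
    by_contra hne
    exact not_isBridge_of_adj_of_adj (hv₁.2 u hu hne) hxu.symm hbridge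
  obtain ⟨u, v, huv, hwin'⟩ : ∃ u v, G.Adj u v ∧ WinsWithin2 (G.deleteEdges {s(u, v)}) := by
    by_cases hsmall : ∀ u ∈ C₁, u = v₁
    · obtain ⟨w, hw, hxw, -⟩ := hcomp.exists_adj_right_ne hx₁ hdeg x
      exact ⟨x, w, hxw, hcomp.winsWithin2_deleteEdge_of_forall_eq hv₁ hx₁ hsmall hadj hw hwin⟩
    push Not at hsmall
    obtain ⟨u₁, hu₁, hu₁v⟩ := hsmall
    exact hcomp.exists_winsWithin2_deleteEdge_of_ne hv₁ hx₁ hadj hdeg hwin hu₁ hu₁v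
  exact hcrit u v huv hwin'

theorem stmt10 {V : Type*} [Fintype V] (G : SimpleGraph V) (hconn : G.Connected)
    (x : V) (C₁ C₂ : Set V) (hcomp : IsTwoComponents G x C₁ C₂)
    (v₁ : V) (hv₁ : UnivIn G C₁ v₁)
    (hadj : G.Adj v₁ x) (hbridge : G.IsBridge s(v₁, x))
    (hdeg : 3 ≤ (G.neighborSet x).ncard) :
    ¬ Critical2 G :=
  stmt10_general G x C₁ C₂ hcomp v₁ hv₁ hadj hbridge hdeg
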